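/- arXiv:1807.05810 — 2 statements merged into one kernel-verified Lean document; each statement's English description precedes it below -/
import Mathlib

section
/- Let T : X ⇉ X be union nonexpansive with strong fixed point x*, let (λ_n) ⊆ (0,1] with liminf λ_n(1−λ_n) > 0, and let r := r(x*;T). If x_0 lies in the open ball of radius r around x* and x_{n+1} ∈ (1−λ_n)x_n + λ_n T(x_n) for all n, then (x_n) converges to a point x̄ ∈ Fix T with ‖x̄ − x*‖ ≤ r. -/
open Filter Topology ENNReal

/-- Outer semicontinuity of an index-valued map `φ : X ⇉ I` (finite discrete `I`). -/
def OSCIdx {X I : Type*} [TopologicalSpace X] (φ : X → Set I) : Prop :=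
  ∀ (x : X) (i : I) (xn : ℕ → X),
    Tendsto xn atTop (nhds x) → (∀ n, i ∈ φ (xn n)) → i ∈ φ x

/-- `S : X → X` is nonexpansive. -/
def Nonexpansive {X : Type*} [NormedAddCommGroup X] (S : X → X) : Prop :=
  ∀ x y : X, ‖S x - S y‖ ≤ ‖x - y‖

/-- The radius of attraction `r(x*;T) = sup{δ > 0 : φ(x) ⊆ φ(x*) ∀ x ∈ B(x*;δ)}`,
as an element of `(0,+∞]` (modeled in `ℝ≥0∞`, with the closed ball described by
`edist x x* ≤ δ`). -/
noncomputable def attractRadius {X I : Type*} [PseudoEMetricSpace X]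
    (φ : X → Set I) (xs : X) : ℝ≥0∞ :=
  sSup {δ : ℝ≥0∞ | 0 < δ ∧ ∀ x : X, edist x xs ≤ δ → φ x ⊆ φ xs}

/-!
Near the strong fixed point `x*` only indices of `φ(x*)` are active, and each of them fixes
`x*`, so every step is an averaged nonexpansive step towards `x*`: the distance to `x*` does
not increase (so the iterates stay in the ball they start in), and by the strong convexity of
`‖·‖²` its square drops by at least `λₙ(1-λₙ)‖Tᵢxₙ - xₙ‖²`. Hence the residuals tend to `0`.
A cluster point `x̄` exists by compactness. Outer semicontinuity and finiteness of `I` show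
that near `x̄` only indices of `φ(x̄)` are active, and those with small residual fix `x̄`; so
once an iterate is close to `x̄`, the same Fejér argument around `x̄` keeps all later iterates
at least as close, which gives convergence and `x̄ ∈ T(x̄)`.
-/

open Set

lemma le_of_le_imp_succ_le {α : Type*} [Preorder α] {a : ℕ → α} {m : ℕ}
    (h : ∀ n ≥ m, a n ≤ a m → a (n + 1) ≤ a n) : ∀ n ≥ m, a n ≤ a m := by
  intro n hn
  induction n, hn using Nat.le_induction with
  | base => exact le_rfl
  | succ n hn ih => exact (h n hn ih).trans ih

lemma tendsto_zero_of_mul_le_sub_succ {a b c : ℕ → ℝ} (ha : BddBelow (range a))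
    (hb : ∀ n, 0 ≤ b n) (hc : ∀ n, 0 ≤ c n) (hc_liminf : 0 < liminf c atTop)
    (h : ∀ n, c n * b n ≤ a n - a (n + 1)) : Tendsto b atTop (𝓝 0) := by
  set κ := liminf c atTop / 2
  have hκ : 0 < κ := half_pos hc_liminf
  have hanti : Antitone a := antitone_nat_of_succ_le fun n => by
    linarith [h n, mul_nonneg (hc n) (hb n)]
  have hdiff : Tendsto (fun n => (a n - a (n + 1)) / κ) atTop (𝓝 0) := by
    have hlim := tendsto_atTop_ciInf hanti ha
    simpa using (hlim.sub (hlim.comp (tendsto_add_atTop_nat 1))).div_const κ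
  have hc_large : ∀ᶠ n in atTop, κ < c n :=
    eventually_lt_of_lt_liminf (half_lt_self hc_liminf) (isBoundedUnder_of ⟨0, hc⟩)
  refine squeeze_zero' (Eventually.of_forall hb) ?_ hdiff
  filter_upwards [hc_large] with n hn
  rw [le_div_iff₀ hκ]
  nlinarith [h n, hb n]

lemma tendsto_of_mapClusterPt_of_eventually_dist_succ_le {α : Type*} [PseudoMetricSpace α]
    {x : ℕ → α} {a : α} (ha : MapClusterPt a atTop x) {U : Set α} (hU : U ∈ 𝓝 a)
    (h : ∀ᶠ n in atTop, x n ∈ U → dist (x (n + 1)) a ≤ dist (x n) a) :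
    Tendsto x atTop (𝓝 a) := by
  obtain ⟨δ, hδ, hδU⟩ := Metric.mem_nhds_iff.1 hU
  obtain ⟨N, hN⟩ := eventually_atTop.1 h
  refine Metric.tendsto_atTop.2 fun ε hε => ?_
  obtain ⟨m, hNm, hxm⟩ :=
    (ha.frequently (Metric.ball_mem_nhds a (lt_min hε hδ))).forall_exists_of_atTop N
  have hxm : dist (x m) a < min ε δ := hxm
  have hle := le_of_le_imp_succ_le (a := fun n => dist (x n) a) (m := m) fun n hmn hn =>
    hN n (hNm.trans hmn) (hδU (hn.trans_lt (hxm.trans_le (min_le_right _ _))))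
  exact ⟨m, fun n hn => (hle n hn).trans_lt (hxm.trans_le (min_le_left _ _))⟩

lemma OSCIdx.isClosed_setOf_mem {X I : Type*} [TopologicalSpace X] [SequentialSpace X]
    {φ : X → Set I} (hφ : OSCIdx φ) (i : I) : IsClosed {x | i ∈ φ x} :=
  IsSeqClosed.isClosed fun _ _ hmem hlim => hφ _ i _ hlim hmem

lemma OSCIdx.eventually_subset {X I : Type*} [TopologicalSpace X] [SequentialSpace X]
    [Finite I] {φ : X → Set I} (hφ : OSCIdx φ) (x : X) : ∀ᶠ y in 𝓝 x, φ y ⊆ φ x := by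
  have : ∀ i, ∀ᶠ y in 𝓝 x, i ∈ φ y → i ∈ φ x := fun i => by
    by_cases hi : i ∈ φ x
    · exact Eventually.of_forall fun _ _ => hi
    · exact eventually_of_mem ((hφ.isClosed_setOf_mem i).isOpen_compl.mem_nhds hi)
        fun _ hy h => absurd h hy
  exact (eventually_all.2 this).mono fun _ hy i => hy i

lemma subset_of_edist_le_of_lt_attractRadius {X I : Type*} [PseudoEMetricSpace X]
    {φ : X → Set I} {xs y x : X} (hy : edist y xs < attractRadius φ xs)
    (hx : edist x xs ≤ edist y xs) : φ x ⊆ φ xs := by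
  obtain ⟨δ, ⟨-, hδ⟩, hyδ⟩ := lt_sSup_iff.1 hy
  exact hδ x (hx.trans hyδ.le)

lemma eventually_fixed_of_sub_eq {X I : Type*} [TopologicalSpace X] [AddGroup X]
    [IsTopologicalAddGroup X] [T2Space X] [Finite I] {Ts : I → X → X}
    (hTs : ∀ i, Continuous (Ts i)) (a : X) :
    ∀ᶠ p in 𝓝 a ×ˢ 𝓝 (0 : X), ∀ i, Ts i p.1 - p.1 = p.2 → Ts i a = a := by
  rw [← nhds_prod_eq]
  refine eventually_all.2 fun i => ?_
  by_cases hi : Ts i a = a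
  · exact Eventually.of_forall fun _ _ => hi
  · have hopen : IsOpen {p : X × X | Ts i p.1 - p.1 ≠ p.2} :=
      isOpen_ne_fun (by fun_prop) (by fun_prop)
    exact eventually_of_mem (hopen.mem_nhds (by simpa [sub_eq_zero] using hi))
      fun _ hp h => absurd h hp

lemma exists_mem_nhds_eventually_active_fixed {X I : Type*} [TopologicalSpace X]
    [SequentialSpace X] [AddGroup X] [IsTopologicalAddGroup X] [T2Space X] [Finite I]
    {Ts : I → X → X} {φ : X → Set I} {x : ℕ → X} {idx : ℕ → I}
    (hTs : ∀ i, Continuous (Ts i)) (hφ : OSCIdx φ) (hidx : ∀ n, idx n ∈ φ (x n))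
    (hres : Tendsto (fun n => Ts (idx n) (x n) - x n) atTop (𝓝 0)) (a : X) :
    ∃ U ∈ 𝓝 a, ∀ᶠ n in atTop, x n ∈ U → idx n ∈ φ a ∧ Ts (idx n) a = a := by
  have hgood : ∀ᶠ p in 𝓝 a ×ˢ 𝓝 (0 : X),
      φ p.1 ⊆ φ a ∧ ∀ i, Ts i p.1 - p.1 = p.2 → Ts i a = a :=
    ((hφ.eventually_subset a).prod_inl _).and (eventually_fixed_of_sub_eq hTs a)
  obtain ⟨pa, hpa, pb, hpb, hp⟩ := eventually_prod_iff.1 hgood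
  refine ⟨{y | pa y}, hpa, (hres.eventually hpb).mono fun n hn hxn => ?_⟩
  obtain ⟨hsub, hfix⟩ := hp hxn hn
  exact ⟨hsub (hidx n), hfix _ rfl⟩

lemma Nonexpansive.continuous {X : Type*} [NormedAddCommGroup X] {S : X → X}
    (hS : Nonexpansive S) : Continuous S :=
  (LipschitzWith.of_dist_le_mul (K := 1) fun u v => by
    simpa [dist_eq_norm] using hS u v).continuous

section Averaged

variable {X : Type*} [NormedAddCommGroup X] [InnerProductSpace ℝ X]

lemma norm_one_sub_smul_add_smul_sq (t : ℝ) (u v : X) :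
    ‖(1 - t) • u + t • v‖ ^ 2 =
      (1 - t) * ‖u‖ ^ 2 + t * ‖v‖ ^ 2 - t * (1 - t) * ‖u - v‖ ^ 2 := by
  rw [norm_add_sq_real, norm_sub_sq_real, norm_smul, norm_smul, real_inner_smul_left,
    real_inner_smul_right, mul_pow, mul_pow, Real.norm_eq_abs, Real.norm_eq_abs, sq_abs, sq_abs]
  ring

lemma norm_averaged_sub_sq_le {S : X → X} (hS : Nonexpansive S) {y : X} (hy : S y = y)
    {t : ℝ} (ht : t ∈ Icc (0 : ℝ) 1) (u : X) :
    ‖(1 - t) • u + t • S u - y‖ ^ 2 ≤ ‖u - y‖ ^ 2 - t * (1 - t) * ‖S u - u‖ ^ 2 := by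
  have hSu : ‖S u - y‖ ^ 2 ≤ ‖u - y‖ ^ 2 := by
    simpa only [hy] using pow_le_pow_left₀ (norm_nonneg _) (hS u y) 2
  have hsplit : (1 - t) • u + t • S u - y = (1 - t) • (u - y) + t • (S u - y) := by module
  rw [hsplit, norm_one_sub_smul_add_smul_sq, ← norm_neg (u - y - (S u - y)),
    show -(u - y - (S u - y)) = S u - u by abel]
  nlinarith [ht.1, ht.2]

lemma norm_averaged_sub_le {S : X → X} (hS : Nonexpansive S) {y : X} (hy : S y = y)
    {t : ℝ} (ht : t ∈ Icc (0 : ℝ) 1) (u : X) :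
    ‖(1 - t) • u + t • S u - y‖ ≤ ‖u - y‖ := by
  have := norm_averaged_sub_sq_le hS hy ht u
  have : 0 ≤ t * (1 - t) * ‖S u - u‖ ^ 2 :=
    mul_nonneg (mul_nonneg ht.1 (sub_nonneg.2 ht.2)) (sq_nonneg _)
  exact (pow_le_pow_iff_left₀ (norm_nonneg _) (norm_nonneg _) two_ne_zero).1 (by linarith)

end Averaged

section Iteration

variable {X I : Type*} [NormedAddCommGroup X] [InnerProductSpace ℝ X]
  {Ts : I → X → X} {lam : ℕ → ℝ} {x : ℕ → X} {idx : ℕ → I}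

lemma dist_iterate_succ_le
    (hstep : ∀ n, x (n + 1) = (1 - lam n) • x n + lam n • Ts (idx n) (x n))
    (hTs : ∀ i, Nonexpansive (Ts i)) {n : ℕ} (hlam : lam n ∈ Icc (0 : ℝ) 1) {y : X}
    (hy : Ts (idx n) y = y) : dist (x (n + 1)) y ≤ dist (x n) y := by
  rw [dist_eq_norm, dist_eq_norm, hstep]
  exact norm_averaged_sub_le (hTs _) hy hlam _

lemma dist_iterate_le_of_fixed
    (hstep : ∀ n, x (n + 1) = (1 - lam n) • x n + lam n • Ts (idx n) (x n))
    (hTs : ∀ i, Nonexpansive (Ts i)) (hlam : ∀ n, lam n ∈ Icc (0 : ℝ) 1) {y : X}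
    (hfix : ∀ n, dist (x n) y ≤ dist (x 0) y → Ts (idx n) y = y) (n : ℕ) :
    dist (x n) y ≤ dist (x 0) y :=
  le_of_le_imp_succ_le (a := fun n => dist (x n) y)
    (fun n _ hn => dist_iterate_succ_le hstep hTs (hlam n) (hfix n hn)) n n.zero_le

lemma tendsto_iterate_residual
    (hstep : ∀ n, x (n + 1) = (1 - lam n) • x n + lam n • Ts (idx n) (x n))
    (hTs : ∀ i, Nonexpansive (Ts i)) (hlam : ∀ n, lam n ∈ Icc (0 : ℝ) 1)
    (hliminf : 0 < liminf (fun n => lam n * (1 - lam n)) atTop) {y : X}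
    (hfix : ∀ n, Ts (idx n) y = y) :
    Tendsto (fun n => Ts (idx n) (x n) - x n) atTop (𝓝 0) := by
  have hsq : Tendsto (fun n => ‖Ts (idx n) (x n) - x n‖ ^ 2) atTop (𝓝 0) := by
    refine tendsto_zero_of_mul_le_sub_succ (a := fun n => ‖x n - y‖ ^ 2)
      ⟨0, by rintro _ ⟨n, rfl⟩; positivity⟩ (fun n => by positivity)
      (fun n => mul_nonneg (hlam n).1 (sub_nonneg.2 (hlam n).2)) hliminf fun n => ?_
    have := norm_averaged_sub_sq_le (hTs (idx n)) (hfix n) (hlam n) (x n)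
    rw [← hstep] at this
    linarith
  rw [tendsto_zero_iff_norm_tendsto_zero]
  simpa [Real.sqrt_sq (norm_nonneg _)] using hsq.sqrt

end Iteration

theorem stmt_11_general {X I : Type*}
    [NormedAddCommGroup X] [InnerProductSpace ℝ X] [FiniteDimensional ℝ X]
    [Fintype I]
    (Ts : I → X → X) (hTs : ∀ i, Nonexpansive (Ts i))
    (φ : X → Set I) (hφ : OSCIdx φ)
    (T : X → Set X) (hT : ∀ x, T x = {y | ∃ i ∈ φ x, y = Ts i x})
    (xs : X) (hxs : T xs = {xs})
    (lam : ℕ → ℝ) (hlam : ∀ n, lam n ∈ Set.Ioc (0 : ℝ) 1)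
    (hliminf : 0 < Filter.atTop.liminf fun n => lam n * (1 - lam n))
    (x : ℕ → X) (hx0 : edist (x 0) xs < attractRadius φ xs)
    (hrec : ∀ n, ∃ z ∈ T (x n), x (n + 1) = (1 - lam n) • x n + lam n • z) :
    ∃ xb : X, xb ∈ T xb ∧ edist xb xs ≤ attractRadius φ xs ∧
      Tendsto x atTop (nhds xb) := by
  choose z hz hstep using hrec
  simp only [hT, mem_ofPred_eq] at hz
  choose idx hidx hzi using hz
  obtain rfl : z = fun n => Ts (idx n) (x n) := funext hzi
  have hlam' : ∀ n, lam n ∈ Icc (0 : ℝ) 1 := fun n => Ioc_subset_Icc_self (hlam n)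
  have hedist {y : X} (hy : dist y xs ≤ dist (x 0) xs) : edist y xs ≤ edist (x 0) xs := by
    rw [edist_dist, edist_dist]; exact ENNReal.ofReal_le_ofReal hy
  have hfixs {i : I} (hi : i ∈ φ xs) : Ts i xs = xs := by
    have : Ts i xs ∈ T xs := by rw [hT]; exact ⟨i, hi, rfl⟩
    rwa [hxs] at this
  have hfix_of_le {n : ℕ} (hn : dist (x n) xs ≤ dist (x 0) xs) : Ts (idx n) xs = xs :=
    hfixs (subset_of_edist_le_of_lt_attractRadius hx0 (hedist hn) (hidx n))
  have hstay := dist_iterate_le_of_fixed hstep hTs hlam' fun n => hfix_of_le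
  have hres := tendsto_iterate_residual hstep hTs hlam' hliminf fun n => hfix_of_le (hstay n)
  obtain ⟨xb, hxb, hclust⟩ := (isCompact_closedBall xs (dist (x 0) xs)).exists_mapClusterPt
    (f := atTop) (u := x) (tendsto_principal.2 (Eventually.of_forall hstay))
  obtain ⟨U, hU, hactive⟩ := exists_mem_nhds_eventually_active_fixed
    (fun i => (hTs i).continuous) hφ hidx hres xb
  have hlim : Tendsto x atTop (𝓝 xb) := tendsto_of_mapClusterPt_of_eventually_dist_succ_le hclust
    hU (hactive.mono fun n hn hxn => dist_iterate_succ_le hstep hTs (hlam' n) (hn hxn).2)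
  obtain ⟨n, hn, hxn⟩ := (hactive.and (hlim.eventually_mem hU)).exists
  refine ⟨xb, ?_, (hedist hxb).trans hx0.le, hlim⟩
  rw [hT]
  exact ⟨idx n, (hn hxn).1, (hn hxn).2.symm⟩

/-- Local convergence of union nonexpansive iterations: if `T` is union
nonexpansive with strong fixed point `x*`, `(λ_n) ⊆ (0,1]` with
`liminf λ_n(1−λ_n) > 0`, `x_0` in the open ball of radius `r := r(x*;T)` about `x*`
and `x_{n+1} ∈ (1−λ_n)x_n + λ_n T(x_n)`, then `(x_n)` converges to some
`x̄ ∈ Fix T` with `‖x̄ − x*‖ ≤ r`. -/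
theorem stmt_11 {X I : Type*}
    [NormedAddCommGroup X] [InnerProductSpace ℝ X] [FiniteDimensional ℝ X]
    [Fintype I] [Nonempty I]
    (Ts : I → X → X) (hTs : ∀ i, Nonexpansive (Ts i))
    (φ : X → Set I) (hφ : OSCIdx φ) (hne : ∀ x, (φ x).Nonempty)
    (T : X → Set X) (hT : ∀ x, T x = {y | ∃ i ∈ φ x, y = Ts i x})
    (xs : X) (hxs : T xs = {xs})
    (lam : ℕ → ℝ) (hlam : ∀ n, lam n ∈ Set.Ioc (0 : ℝ) 1)
    (hliminf : 0 < Filter.atTop.liminf fun n => lam n * (1 - lam n))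
    (x : ℕ → X) (hx0 : edist (x 0) xs < attractRadius φ xs)
    (hrec : ∀ n, ∃ z ∈ T (x n), x (n + 1) = (1 - lam n) • x n + lam n • z) :
    ∃ xb : X, xb ∈ T xb ∧ edist xb xs ≤ attractRadius φ xs ∧
      Tendsto x atTop (nhds xb) :=
  stmt_11_general Ts hTs φ hφ T hT xs hxs lam hlam hliminf x hx0 hrec
end

section
/- Let f := min_{i∈I} f_i be a min-convex function and γ > 0. Then prox_{γf} is union 1/2-averaged nonexpansive: prox_{γf}(x) = {prox_{γf_i}(x) : i ∈ φ(x)} where φ(x) := {i ∈ I : ^γf(x) = ^γf_i(x)}, each prox_{γf_i} is 1/2-averaged (firmly) nonexpansive, and φ is outer semicontinuous with nonempty values. -/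
open Filter Topology RealInnerProductSpace

/-- `f : X → (−∞,+∞]` is proper: it never takes the value `−∞` and is somewhere
finite.  (We model `(−∞,+∞]`-valued functions as `EReal`-valued functions.) -/
def ProperFn {X : Type*} (f : X → EReal) : Prop :=
  (∃ x, f x ≠ ⊤) ∧ ∀ x, f x ≠ ⊥

/-- The Moreau envelope `^γf(x) = inf_y (f(y) + (1/(2γ))‖x−y‖²)`. -/
noncomputable def moreau {X : Type*} [NormedAddCommGroup X]
    (γ : ℝ) (f : X → EReal) (x : X) : EReal :=
  ⨅ y : X, f y + ((1 / (2 * γ) * ‖x - y‖ ^ 2 : ℝ) : EReal)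

/-- The proximal subdifferential `∂_p f(x)`. -/
def psubdiff {X : Type*} [NormedAddCommGroup X] [InnerProductSpace ℝ X]
    (f : X → EReal) (x : X) : Set X :=
  {v | ∃ γ > (0 : ℝ), ∃ δ > (0 : ℝ), ∀ y ∈ Metric.closedBall x δ,
    ((⟪v, y - x⟫ : ℝ) : EReal) ≤ f y - f x + ((1 / (2 * γ) * ‖y - x‖ ^ 2 : ℝ) : EReal)}

/-- The proximity operator: points attaining the infimum in the Moreau envelope. -/
noncomputable def proxSet {X : Type*} [NormedAddCommGroup X]
    (γ : ℝ) (f : X → EReal) (x : X) : Set X :=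
  {p | f p + ((1 / (2 * γ) * ‖x - p‖ ^ 2 : ℝ) : EReal) = moreau γ f x}

/-- Convexity of an `EReal`-valued function. -/
def ERealConvexFn {X : Type*} [AddCommGroup X] [Module ℝ X] (f : X → EReal) : Prop :=
  ∀ x y : X, ∀ t : ℝ, 0 < t → t < 1 →
    f (t • x + (1 - t) • y) ≤ (t : EReal) * f x + ((1 - t : ℝ) : EReal) * f y

/-- `S : X → X` is `1/2`-averaged (firmly) nonexpansive. -/
def HalfAveraged {X : Type*} [NormedAddCommGroup X] [InnerProductSpace ℝ X]
    (S : X → X) : Prop :=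
  ∀ x y : X, ‖S x - S y‖ ^ 2 + ‖(x - S x) - (y - S y)‖ ^ 2 ≤ ‖x - y‖ ^ 2

/-!
For a proper, lower semicontinuous, convex `g` on a finite-dimensional space, `g` is bounded
below by `A - K ‖· - x₀‖` (its minimum on a ball around a point of finiteness, propagated by
convexity), so `y ↦ g y + ‖x - y‖² / (2γ)` is lower semicontinuous with bounded sublevel sets
and attains its infimum. A minimiser `p` satisfies `⟪x - p, z - p⟫ ≤ γ (g z - g p)`; adding
this inequality at two points gives firm nonexpansiveness, hence uniqueness and continuity of
`prox_{γg}`, and the continuity of `prox_{γg}` makes the Moreau envelope continuous.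

For `f = min_i f_i` the Moreau envelope is `min_i ^γf_i`, so `φ(x)` is the set of indices
minimising the continuous functions `^γf_i` at `x`: nonempty, and outer semicontinuous by
passing to the limit in `^γf_i ≤ ^γf_j`. The minimisers of `f(y) + ‖x - y‖² / (2γ)` are the
prox points of the `f_i` that attain the minimum.
-/

open Metric

theorem LowerSemicontinuous.exists_forall_le_of_isBounded {α β : Type*} [PseudoMetricSpace α]
    [ProperSpace α] [LinearOrder β] {F : α → β} (hF : LowerSemicontinuous F) (x₀ : α)
    (hb : Bornology.IsBounded {y | F y ≤ F x₀}) : ∃ a, ∀ y, F a ≤ F y := by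
  obtain ⟨a, -, ha⟩ := LowerSemicontinuousOn.exists_isMinOn (s := {y | F y ≤ F x₀}) ⟨x₀, le_rfl⟩
    (hb.isCompact_closure.of_isClosed_subset (hF.isClosed_preimage _) subset_closure)
    (hF.lowerSemicontinuousOn _)
  refine ⟨a, fun y => ?_⟩
  rcases le_total (F y) (F x₀) with hy | hy
  · exact ha hy
  · exact (ha (le_refl (F x₀))).trans hy

theorem EReal.iInf_add_coe {ι : Sort*} (u : ι → EReal) (r : ℝ) :
    (⨅ i, u i) + r = ⨅ i, (u i + r) :=
  Monotone.map_iInf_of_continuousAt (f := (· + (r : EReal)))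
    ((EReal.continuousAt_add (.inr (EReal.coe_ne_bot r)) (.inr (EReal.coe_ne_top r))).comp
      (continuous_id.prodMk continuous_const).continuousAt)
    (fun _ _ h => add_le_add_left h _) (EReal.top_add_coe r)

theorem HalfAveraged.lipschitzWith_one {X : Type*} [NormedAddCommGroup X]
    [InnerProductSpace ℝ X] {S : X → X} (hS : HalfAveraged S) : LipschitzWith 1 S :=
  LipschitzWith.of_dist_le_mul fun x y => by
    rw [dist_eq_norm, dist_eq_norm, NNReal.coe_one, one_mul]
    exact (pow_le_pow_iff_left₀ (norm_nonneg _) (norm_nonneg _) two_ne_zero).1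
      ((le_add_of_nonneg_right (sq_nonneg _)).trans (hS x y))

theorem ProperFn.exists_coe_eq {X : Type*} {g : X → EReal} (hg : ProperFn g) :
    ∃ (x₀ : X) (r : ℝ), g x₀ = r :=
  let ⟨x₀, hx₀⟩ := hg.1
  ⟨x₀, _, (EReal.coe_toReal hx₀ (hg.2 x₀)).symm⟩

section Minorant

variable {X : Type*} [NormedAddCommGroup X] [NormedSpace ℝ X] {g : X → EReal}

theorem ProperFn.exists_affine_minorant [ProperSpace X] (hg : ProperFn g)
    (hl : LowerSemicontinuous g) (hc : ERealConvexFn g) :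
    ∃ (x₀ : X) (A K : ℝ), 0 ≤ K ∧ ∀ p, ((A - K * ‖p - x₀‖ : ℝ) : EReal) ≤ g p := by
  obtain ⟨x₀, r₀, hx₀⟩ := hg.exists_coe_eq
  have hx₀ball : x₀ ∈ closedBall x₀ 1 := mem_closedBall_self zero_le_one
  obtain ⟨a, -, ha⟩ := (hl.lowerSemicontinuousOn (closedBall x₀ 1)).exists_isMinOn
    ⟨x₀, hx₀ball⟩ (isCompact_closedBall x₀ 1)
  have ha_ne_top : g a ≠ ⊤ := ne_top_of_le_ne_top (hx₀ ▸ EReal.coe_ne_top r₀) (ha hx₀ball)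
  set m := (g a).toReal
  have hball : ∀ z ∈ closedBall x₀ 1, (m : EReal) ≤ g z := fun z hz => by
    rw [EReal.coe_toReal ha_ne_top (hg.2 a)]; exact ha hz
  have hmr : m ≤ r₀ := EReal.coe_le_coe_iff.1 (hx₀ ▸ hball x₀ hx₀ball)
  refine ⟨x₀, m, r₀ - m, sub_nonneg.2 hmr, fun p => ?_⟩
  set R := ‖p - x₀‖
  rcases le_or_gt R 1 with hR | hR
  · refine le_trans (EReal.coe_le_coe_iff.2 ?_) (hball p (mem_closedBall_iff_norm.2 hR))
    nlinarith [norm_nonneg (p - x₀)]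
  by_cases htop : g p = ⊤
  · simp [htop]
  rw [← EReal.coe_toReal htop (hg.2 p)]
  -- convexity along the segment from `x₀` to `p`, at its point on the unit sphere
  have hz : R⁻¹ • p + (1 - R⁻¹) • x₀ ∈ closedBall x₀ 1 := by
    rw [mem_closedBall_iff_norm, show R⁻¹ • p + (1 - R⁻¹) • x₀ - x₀ = R⁻¹ • (p - x₀) by module,
      norm_smul, norm_inv, norm_norm, inv_mul_cancel₀ (by positivity)]
  have hcvx := (hball _ hz).trans (hc p x₀ R⁻¹ (by positivity) (inv_lt_one_of_one_lt₀ hR))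
  rw [← EReal.coe_toReal htop (hg.2 p), hx₀, ← EReal.coe_mul, ← EReal.coe_mul, ← EReal.coe_add,
    EReal.coe_le_coe_iff] at hcvx
  rw [EReal.coe_le_coe_iff]
  have : R * m ≤ (g p).toReal + (R - 1) * r₀ :=
    calc R * m ≤ R * (R⁻¹ * (g p).toReal + (1 - R⁻¹) * r₀) := by gcongr
      _ = (g p).toReal + (R - 1) * r₀ := by field_simp
  linarith

end Minorant

section Moreau

variable {X : Type*} [NormedAddCommGroup X] {γ : ℝ} {g : X → EReal} {x p : X}

theorem moreau_le (γ : ℝ) (g : X → EReal) (x y : X) :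
    moreau γ g x ≤ g y + ((1 / (2 * γ) * ‖x - y‖ ^ 2 : ℝ) : EReal) :=
  iInf_le _ y

theorem mem_proxSet_iff_forall_le : p ∈ proxSet γ g x ↔
    ∀ y, g p + ((1 / (2 * γ) * ‖x - p‖ ^ 2 : ℝ) : EReal)
      ≤ g y + ((1 / (2 * γ) * ‖x - y‖ ^ 2 : ℝ) : EReal) :=
  ⟨fun h y => by rw [show _ = moreau γ g x from h]; exact moreau_le γ g x y,
    fun h => le_antisymm (le_iInf h) (moreau_le γ g x p)⟩

theorem ProperFn.ne_top_of_mem_proxSet (hg : ProperFn g) (hp : p ∈ proxSet γ g x) :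
    g p ≠ ⊤ := by
  obtain ⟨x₀, r₀, hx₀⟩ := hg.exists_coe_eq
  intro htop
  have := mem_proxSet_iff_forall_le.1 hp x₀
  rw [htop, hx₀, EReal.top_add_coe, ← EReal.coe_add, top_le_iff] at this
  exact EReal.coe_ne_top _ this

theorem ProperFn.coe_toReal_moreau (hg : ProperFn g) (hp : p ∈ proxSet γ g x) :
    ((moreau γ g x).toReal : EReal) = moreau γ g x := by
  rw [← show _ = moreau γ g x from hp, ← EReal.coe_toReal (hg.ne_top_of_mem_proxSet hp) (hg.2 p),
    ← EReal.coe_add, EReal.toReal_coe]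

theorem moreau_le_moreau_add {w : X} (hp : p ∈ proxSet γ g w) (u : X) :
    moreau γ g u ≤ moreau γ g w + ((1 / (2 * γ) * (‖u - p‖ ^ 2 - ‖w - p‖ ^ 2) : ℝ) : EReal) := by
  rw [← show _ = moreau γ g w from hp, add_assoc, ← EReal.coe_add]
  convert moreau_le γ g u p using 3
  ring

theorem ProperFn.continuous_moreau (hg : ProperFn g) {P : X → X}
    (hP : ∀ x, P x ∈ proxSet γ g x) (hPc : Continuous P) : Continuous (moreau γ g) := by
  set m : X → ℝ := fun x => (moreau γ g x).toReal
  have hm : ∀ x, (m x : EReal) = moreau γ g x := fun x => hg.coe_toReal_moreau (hP x)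
  have hle : ∀ u w, m u ≤ m w + 1 / (2 * γ) * (‖u - P w‖ ^ 2 - ‖w - P w‖ ^ 2) := fun u w => by
    have := moreau_le_moreau_add (hP w) u
    rwa [← hm, ← hm, ← EReal.coe_add, EReal.coe_le_coe_iff] at this
  -- squeeze `m u` between two continuous functions of `u` that agree with `m x` at `x`
  have hmc : Continuous m := continuous_iff_continuousAt.2 fun x => by
    have hlo : Continuous fun u => m x - 1 / (2 * γ) * (‖x - P u‖ ^ 2 - ‖u - P u‖ ^ 2) := by
      fun_prop
    have hhi : Continuous fun u => m x + 1 / (2 * γ) * (‖u - P x‖ ^ 2 - ‖x - P x‖ ^ 2) := by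
      fun_prop
    have hlo' := hlo.tendsto x
    have hhi' := hhi.tendsto x
    rw [sub_self, mul_zero, sub_zero] at hlo'
    rw [sub_self, mul_zero, add_zero] at hhi'
    exact tendsto_of_tendsto_of_tendsto_of_le_of_le hlo' hhi' (fun u => by linarith [hle x u])
      (fun u => hle u x)
  rw [show moreau γ g = fun x => (m x : EReal) from funext fun x => (hm x).symm]
  exact continuous_coe_real_ereal.comp hmc

end Moreau

section Existence

variable {X : Type*} [NormedAddCommGroup X] [NormedSpace ℝ X] [ProperSpace X] {γ : ℝ}
  {g : X → EReal}

theorem ProperFn.exists_mem_proxSet (hg : ProperFn g) (hl : LowerSemicontinuous g)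
    (hc : ERealConvexFn g) (hγ : 0 < γ) (x : X) : ∃ p, p ∈ proxSet γ g x := by
  set c := 1 / (2 * γ)
  set F : X → EReal := fun y => g y + ((c * ‖x - y‖ ^ 2 : ℝ) : EReal)
  have hF : LowerSemicontinuous F :=
    hl.add' (continuous_coe_real_ereal.comp (by fun_prop)).lowerSemicontinuous
      fun _ => EReal.continuousAt_add (.inr (EReal.coe_ne_bot _)) (.inr (EReal.coe_ne_top _))
  obtain ⟨x₀, r₀, hx₀⟩ := hg.exists_coe_eq
  suffices hb : Bornology.IsBounded {y | F y ≤ F x₀} by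
    obtain ⟨p, hp⟩ := hF.exists_forall_le_of_isBounded x₀ hb
    exact ⟨p, mem_proxSet_iff_forall_le.2 hp⟩
  obtain ⟨x₁, A, K, hK, hAK⟩ := hg.exists_affine_minorant hl hc
  set D := r₀ + c * ‖x - x₀‖ ^ 2 - A + K * ‖x - x₁‖
  refine (isBounded_closedBall (x := x) (r := (K + |D|) / c + 1)).subset fun y hy => ?_
  have hFy : A - K * ‖y - x₁‖ + c * ‖x - y‖ ^ 2 ≤ r₀ + c * ‖x - x₀‖ ^ 2 := by
    have := (add_le_add_left (hAK y) _).trans (show F y ≤ F x₀ from hy)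
    simp only [F, hx₀, ← EReal.coe_add, EReal.coe_le_coe_iff] at this
    exact this
  have htri : ‖y - x₁‖ ≤ ‖x - y‖ + ‖x - x₁‖ := by
    rw [norm_sub_rev x y]; exact norm_sub_le_norm_sub_add_norm_sub y x x₁
  have hcpos : 0 < c := by positivity
  rw [mem_closedBall, dist_comm, dist_eq_norm]
  -- `c s² - K s ≤ D` with `s = ‖x - y‖` bounds `s`
  by_contra! hs
  have hs' : K + |D| + c < c * ‖x - y‖ := by
    have := mul_lt_mul_of_pos_left hs hcpos
    rwa [mul_add, mul_div_cancel₀ _ hcpos.ne', mul_one] at this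
  nlinarith [le_abs_self D, abs_nonneg D, mul_le_mul_of_nonneg_left htri hK]

end Existence

section Hilbert

variable {X : Type*} [NormedAddCommGroup X] [InnerProductSpace ℝ X] {γ : ℝ} {g : X → EReal}
  {x y p q : X}

theorem inner_le_of_mem_proxSet (hc : ERealConvexFn g) (hγ : 0 < γ) (hp : p ∈ proxSet γ g x)
    {z : X} {rp rz : ℝ} (hgp : g p = rp) (hgz : g z = rz) :
    ⟪x - p, z - p⟫ ≤ γ * (rz - rp) := by
  have hstep : ∀ t ∈ Set.Ioo (0 : ℝ) 1,
      ⟪x - p, z - p⟫ ≤ γ * (rz - rp) + t / 2 * ‖z - p‖ ^ 2 := by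
    rintro t ⟨ht0, ht1⟩
    have hmin := mem_proxSet_iff_forall_le.1 hp (t • z + (1 - t) • p)
    have hcvx := hc z p t ht0 ht1
    rw [hgz, hgp, ← EReal.coe_mul, ← EReal.coe_mul, ← EReal.coe_add] at hcvx
    have := hmin.trans (add_le_add_left hcvx _)
    have hnorm : ‖x - (t • z + (1 - t) • p)‖ ^ 2
        = ‖x - p‖ ^ 2 - 2 * t * ⟪x - p, z - p⟫ + t ^ 2 * ‖z - p‖ ^ 2 := by
      rw [show x - (t • z + (1 - t) • p) = (x - p) - t • (z - p) by module, norm_sub_sq_real,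
        real_inner_smul_right, norm_smul, Real.norm_eq_abs, abs_of_pos ht0]
      ring
    rw [hgp, ← EReal.coe_add, ← EReal.coe_add, EReal.coe_le_coe_iff, hnorm] at this
    have h2γ : 2 * γ * (1 / (2 * γ)) = 1 := by field_simp
    have := mul_le_mul_of_nonneg_left this (by positivity : (0 : ℝ) ≤ 2 * γ)
    nlinarith
  refine ge_of_tendsto (x := 𝓝[>] 0) ?_ (eventually_of_mem (Ioo_mem_nhdsGT one_pos) hstep)
  have : Continuous fun t : ℝ => γ * (rz - rp) + t / 2 * ‖z - p‖ ^ 2 := by fun_prop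
  simpa using (this.tendsto 0).mono_left nhdsWithin_le_nhds

theorem ProperFn.norm_sub_sq_add_le_of_mem_proxSet (hg : ProperFn g) (hc : ERealConvexFn g)
    (hγ : 0 < γ) (hp : p ∈ proxSet γ g x) (hq : q ∈ proxSet γ g y) :
    ‖p - q‖ ^ 2 + ‖(x - p) - (y - q)‖ ^ 2 ≤ ‖x - y‖ ^ 2 := by
  have hgp := EReal.coe_toReal (hg.ne_top_of_mem_proxSet hp) (hg.2 p)
  have hgq := EReal.coe_toReal (hg.ne_top_of_mem_proxSet hq) (hg.2 q)
  have h₁ := inner_le_of_mem_proxSet hc hγ hp hgp.symm hgq.symm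
  have h₂ := inner_le_of_mem_proxSet hc hγ hq hgq.symm hgp.symm
  rw [show q - p = -(p - q) by abel, inner_neg_right] at h₁
  have hmono : 0 ≤ ⟪(x - p) - (y - q), p - q⟫ := by rw [inner_sub_left]; linarith
  rw [show x - y = ((x - p) - (y - q)) + (p - q) by abel, norm_add_sq_real]
  linarith

theorem ProperFn.eq_of_mem_proxSet (hg : ProperFn g) (hc : ERealConvexFn g) (hγ : 0 < γ)
    (hp : p ∈ proxSet γ g x) (hq : q ∈ proxSet γ g x) : p = q := by
  have := hg.norm_sub_sq_add_le_of_mem_proxSet hc hγ hp hq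
  rw [sub_self, norm_zero, zero_pow two_ne_zero] at this
  have : ‖p - q‖ ^ 2 = 0 := le_antisymm (by nlinarith [sq_nonneg ‖x - p - (x - q)‖]) (sq_nonneg _)
  rwa [sq_eq_zero_iff, norm_eq_zero, sub_eq_zero] at this

theorem ProperFn.exists_halfAveraged_proxSet_eq_singleton [ProperSpace X]
    (hg : ProperFn g) (hl : LowerSemicontinuous g) (hc : ERealConvexFn g) (hγ : 0 < γ) :
    ∃ P : X → X, (∀ x, proxSet γ g x = {P x}) ∧ HalfAveraged P := by
  choose P hP using hg.exists_mem_proxSet hl hc hγ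
  exact ⟨P, fun x => Set.eq_singleton_iff_unique_mem.2
      ⟨hP x, fun q hq => hg.eq_of_mem_proxSet hc hγ hq (hP x)⟩,
    fun x y => hg.norm_sub_sq_add_le_of_mem_proxSet hc hγ (hP x) (hP y)⟩

end Hilbert

theorem oscIdx_setOf_forall_le {X I β : Type*} [TopologicalSpace X] [LinearOrder β]
    [TopologicalSpace β] [OrderClosedTopology β] {u : I → X → β} (hu : ∀ i, Continuous (u i)) :
    OSCIdx fun x => {i | ∀ j, u i x ≤ u j x} := fun x i _ hxn hi j =>
  le_of_tendsto_of_tendsto' (((hu i).tendsto x).comp hxn) (((hu j).tendsto x).comp hxn)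
    fun n => hi n j

section MinConvex

variable {X I : Type*} [NormedAddCommGroup X] {γ : ℝ} {f : I → X → EReal} {x p : X}

theorem moreau_iInf (γ : ℝ) (f : I → X → EReal) (x : X) :
    moreau γ (fun y => ⨅ i, f i y) x = ⨅ i, moreau γ (f i) x := by
  simp only [moreau, EReal.iInf_add_coe]
  exact iInf_comm

theorem moreau_iInf_eq_iff_forall_le {i : I} :
    moreau γ (fun y => ⨅ j, f j y) x = moreau γ (f i) x ↔
      ∀ j, moreau γ (f i) x ≤ moreau γ (f j) x := by
  rw [moreau_iInf]
  exact ⟨fun h j => h ▸ iInf_le _ j, fun h => le_antisymm (iInf_le _ i) (le_iInf h)⟩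

theorem mem_proxSet_iInf [Finite I] [Nonempty I] :
    p ∈ proxSet γ (fun y => ⨅ i, f i y) x ↔
      ∃ i, moreau γ (fun y => ⨅ j, f j y) x = moreau γ (f i) x ∧ p ∈ proxSet γ (f i) x := by
  constructor
  · intro hp
    obtain ⟨i, hi⟩ := Finite.exists_min fun j => f j p
    have hfi : ⨅ j, f j p = f i p := le_antisymm (iInf_le _ i) (le_iInf hi)
    have heq : moreau γ (fun y => ⨅ j, f j y) x = moreau γ (f i) x :=
      le_antisymm ((moreau_iInf γ f x).trans_le (iInf_le _ i))
        ((moreau_le γ (f i) x p).trans (by rw [← hfi]; exact hp.le))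
    refine ⟨i, heq, ?_⟩
    show f i p + _ = _
    rw [← heq, ← hfi]
    exact hp
  · rintro ⟨i, heq, hp⟩
    refine le_antisymm ?_ (moreau_le _ _ x p)
    calc (⨅ j, f j p) + ((1 / (2 * γ) * ‖x - p‖ ^ 2 : ℝ) : EReal)
        ≤ f i p + ((1 / (2 * γ) * ‖x - p‖ ^ 2 : ℝ) : EReal) := add_le_add_left (iInf_le _ i) _
      _ = moreau γ (fun y => ⨅ j, f j y) x := heq ▸ hp

end MinConvex

/-- For a min-convex `f = min_i f_i`, `prox_{γf}` is union `1/2`-averaged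
nonexpansive: `prox_{γf}(x) = {prox_{γf_i}(x) : i ∈ φ(x)}` with
`φ(x) = {i : ^γf(x) = ^γf_i(x)}`, each `prox_{γf_i}` single-valued and
`1/2`-averaged, and `φ` osc with nonempty values. -/
theorem stmt_16 {X I : Type*}
    [NormedAddCommGroup X] [InnerProductSpace ℝ X] [FiniteDimensional ℝ X]
    [Fintype I] [Nonempty I]
    (f : I → X → EReal) (hf : ∀ i, ProperFn (f i))
    (hlsc : ∀ i, LowerSemicontinuous (f i)) (hcvx : ∀ i, ERealConvexFn (f i))
    (γ : ℝ) (hγ : 0 < γ) :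
    ∃ P : I → X → X,
      (∀ i x, proxSet γ (f i) x = {P i x}) ∧
      (∀ i, HalfAveraged (P i)) ∧
      OSCIdx (fun x : X =>
        {i : I | moreau γ (fun y => ⨅ j, f j y) x = moreau γ (f i) x}) ∧
      (∀ x : X,
        {i : I | moreau γ (fun y => ⨅ j, f j y) x = moreau γ (f i) x}.Nonempty) ∧
      (∀ x : X, proxSet γ (fun y => ⨅ j, f j y) x =
        {p | ∃ i ∈ {i : I | moreau γ (fun y => ⨅ j, f j y) x = moreau γ (f i) x},
          p = P i x}) := by
  choose P hP hPavg using fun i =>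
    (hf i).exists_halfAveraged_proxSet_eq_singleton (hlsc i) (hcvx i) hγ
  have hcont : ∀ i, Continuous (moreau γ (f i)) := fun i =>
    (hf i).continuous_moreau (fun x => (hP i x).symm ▸ rfl) (hPavg i).lipschitzWith_one.continuous
  refine ⟨P, hP, hPavg, ?_, fun x => ?_, fun x => ?_⟩
  · simpa only [moreau_iInf_eq_iff_forall_le] using oscIdx_setOf_forall_le hcont
  · obtain ⟨i, hi⟩ := Finite.exists_min fun i => moreau γ (f i) x
    exact ⟨i, moreau_iInf_eq_iff_forall_le.2 hi⟩
  · ext p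
    simp only [mem_proxSet_iInf, hP, Set.mem_singleton_iff]
    rfl
end
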